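/- Under the coordinate change R₁ : (x₁, y₁, z₁, w₁) = (1/q₁, −(q₁p₁ + α₂)q₁, q₂, p₂), the function K₁ expressed in terms of (x₁, y₁, z₁, w₁), i.e. the rational function K₁(q₁(x₁,y₁), p₁(x₁,y₁), z₁, w₁) obtained by solving for q₁ and p₁ in terms of x₁ and y₁, is a polynomial in x₁, y₁, z₁, w₁. -/
import Mathlib

/-- K₁ as a function of (q₁,p₁,q₂,p₂) with parameters α₂, α₃. -/
noncomputable def K1f (α₂ α₃ q₁ p₁ q₂ p₂ : ℂ) : ℂ :=
  q₁ ^ 2 * p₁ - p₁ ^ 2 + α₂ * q₁ - q₂ ^ 2 * p₂ / 2 - p₂ ^ 2 / 2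
    - α₃ / 2 * q₂ + 3 / 2 * p₁ * p₂


/-- pulling back K₁ under R₁, i.e. substituting q₁ = 1/x₁,
p₁ = −x₁(x₁y₁+α₂), q₂ = z₁, p₂ = w₁, yields a polynomial in x₁,y₁,z₁,w₁. -/
theorem K1_polynomial_in_R1 (α₂ α₃ : ℂ) :
    ∃ P : MvPolynomial (Fin 4) ℂ, ∀ x₁ y₁ z₁ w₁ : ℂ, x₁ ≠ 0 →
      MvPolynomial.eval (![x₁, y₁, z₁, w₁]) P =
        K1f α₂ α₃ (1 / x₁) (-x₁ * (x₁ * y₁ + α₂)) z₁ w₁ := by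
  classical
  refine ⟨-MvPolynomial.X 1
      - (MvPolynomial.X 0 * (MvPolynomial.X 0 * MvPolynomial.X 1 + MvPolynomial.C α₂)) ^ 2
      - MvPolynomial.C (1/2 : ℂ) * (MvPolynomial.X 2) ^ 2 * MvPolynomial.X 3
      - MvPolynomial.C (1/2 : ℂ) * (MvPolynomial.X 3) ^ 2
      - MvPolynomial.C (α₃ / 2) * MvPolynomial.X 2
      + MvPolynomial.C (3/2 : ℂ) * (-(MvPolynomial.X 0 *
          (MvPolynomial.X 0 * MvPolynomial.X 1 + MvPolynomial.C α₂))) * MvPolynomial.X 3,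
    ?_⟩
  intro x₁ y₁ z₁ w₁ hx
  have e1 : (1/x₁)^2 * (-x₁ * (x₁*y₁+α₂)) + α₂ * (1/x₁) = -y₁ := by
    field_simp; ring
  have key : K1f α₂ α₃ (1 / x₁) (-x₁ * (x₁ * y₁ + α₂)) z₁ w₁ =
      -y₁ - (-x₁ * (x₁ * y₁ + α₂)) ^ 2 - z₁ ^ 2 * w₁ / 2 - w₁ ^ 2 / 2
        - α₃ / 2 * z₁ + 3 / 2 * (-x₁ * (x₁ * y₁ + α₂)) * w₁ := by
    rw [K1f]; linear_combination e1
  rw [key]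
  simp only [map_add, map_sub, map_mul, map_pow, map_neg, MvPolynomial.eval_C,
    MvPolynomial.eval_X, Matrix.cons_val_zero, Matrix.cons_val_one, Matrix.head_cons,
    Matrix.cons_val_two, Matrix.cons_val_three, Matrix.tail_cons, Matrix.head_fin_const]
  ring
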